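/- arXiv:2505.12500 — 4 statements merged into one kernel-verified Lean document; each statement's English description precedes it below -/
import Mathlib

section
/- Let Ω be a finite type with probability mass function w, and let p : Ω → ℝ satisfy 0 ≤ p(s) ≤ 1 for all s. Set P := ∑_s w(s)·p(s) and Q := 1 − P, and assume Q > 0. Then ∑_s (w(s)·(1 − p(s))/Q) · p(s) ≤ P. -/
theorem incorrect_guidance_decreases (Ω : Type*) [Fintype Ω] (w p : Ω → ℝ)
    (hw : ∀ s, 0 ≤ w s) (hsum : ∑ s, w s = 1)
    (hp0 : ∀ s, 0 ≤ p s) (hp1 : ∀ s, p s ≤ 1)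
    (hQ : 0 < 1 - ∑ s, w s * p s) :
    ∑ s, (w s * (1 - p s) / (1 - ∑ t, w t * p t)) * p s ≤ ∑ s, w s * p s := by
  have hCS := Finset.sum_mul_sq_le_sq_mul_sq Finset.univ
    (fun s => Real.sqrt (w s)) (fun s => Real.sqrt (w s) * p s)
  have h1 : ∀ s : Ω, Real.sqrt (w s) * (Real.sqrt (w s) * p s) = w s * p s := by
    intro s; rw [← mul_assoc, Real.mul_self_sqrt (hw s)]
  have h2 : ∀ s : Ω, Real.sqrt (w s) ^ 2 = w s := fun s => Real.sq_sqrt (hw s)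
  have h3 : ∀ s : Ω, (Real.sqrt (w s) * p s) ^ 2 = w s * p s ^ 2 := by
    intro s; rw [mul_pow, h2]
  simp only [h1, h2, h3, hsum, one_mul] at hCS
  -- hCS : (∑ w p)^2 ≤ ∑ w p^2
  have key : ∑ s, w s * (1 - p s) * p s ≤ (∑ s, w s * p s) * (1 - ∑ s, w s * p s) := by
    have : ∑ s, w s * (1 - p s) * p s = ∑ s, w s * p s - ∑ s, w s * p s ^ 2 := by
      rw [← Finset.sum_sub_distrib]; congr 1; ext s; ring
    rw [this]; nlinarith [hCS]
  calc ∑ s, (w s * (1 - p s) / (1 - ∑ t, w t * p t)) * p s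
      = (∑ s, w s * (1 - p s) * p s) / (1 - ∑ t, w t * p t) := by
        rw [Finset.sum_div]; congr 1; ext s; ring
    _ ≤ ∑ s, w s * p s := by
        rw [div_le_iff₀ hQ]; exact key
end

section
/- Let Ω₁, Ω₂ be finite types and w : Ω₁ × Ω₂ → ℝ a probability mass function. Let p : Ω₁ × Ω₂ → ℝ with 0 ≤ p ≤ 1, let P := ∑_{(s,t)} w(s,t)·p(s,t) with P > 0, let q(s) := (∑_t w(s,t)·p(s,t)) / (∑_t w(s,t)) whenever ∑_t w(s,t) > 0 (and q(s) := 0 otherwise). Then ∑_{(s,t)} (w(s,t)·p(s,t)/P) · p(s,t) ≥ ∑_s ((∑_t w(s,t)·p(s,t))/P) · q(s) ≥ P. -/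
theorem two_step_monotone_chain (Ω₁ Ω₂ : Type*) [Fintype Ω₁] [Fintype Ω₂]
    (w p : Ω₁ × Ω₂ → ℝ)
    (hw : ∀ x, 0 ≤ w x) (hsum : ∑ x, w x = 1)
    (hp0 : ∀ x, 0 ≤ p x) (hp1 : ∀ x, p x ≤ 1)
    (hP : 0 < ∑ x, w x * p x)
    (q : Ω₁ → ℝ)
    (hq : ∀ s, q s = if 0 < ∑ t, w (s, t)
      then (∑ t, w (s, t) * p (s, t)) / (∑ t, w (s, t)) else 0) :
    (∑ x, (w x * p x / (∑ y, w y * p y)) * p x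
        ≥ ∑ s, ((∑ t, w (s, t) * p (s, t)) / (∑ y, w y * p y)) * q s)
    ∧ (∑ s, ((∑ t, w (s, t) * p (s, t)) / (∑ y, w y * p y)) * q s
        ≥ ∑ x, w x * p x) := by
  set P : ℝ := ∑ x, w x * p x with hPdef
  set a : Ω₁ → ℝ := fun s => ∑ t, w (s, t) with ha
  set b : Ω₁ → ℝ := fun s => ∑ t, w (s, t) * p (s, t) with hb
  have hb0 : ∀ s, 0 ≤ b s := fun s =>
    Finset.sum_nonneg fun t _ => mul_nonneg (hw _) (hp0 _)
  have ha0 : ∀ s, 0 ≤ a s := fun s => Finset.sum_nonneg fun t _ => hw _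
  have hbz : ∀ s, ¬ 0 < a s → b s = 0 := by
    intro s h
    have haz : a s = 0 := le_antisymm (not_lt.mp h) (ha0 s)
    have hwz : ∀ t, w (s, t) = 0 := by
      intro t
      have := (Finset.sum_eq_zero_iff_of_nonneg (fun t _ => hw (s, t))).mp haz
      exact this t (Finset.mem_univ t)
    simp [hb, hwz]
  have hq0 : ∀ s, 0 ≤ q s := by
    intro s
    rw [hq s]
    split
    · exact div_nonneg (hb0 s) (ha0 s)
    · exact le_refl 0
  -- key pointwise Cauchy-Schwarz for the first inequality
  have key1 : ∀ s, b s * q s ≤ ∑ t, w (s, t) * p (s, t) * p (s, t) := by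
    intro s
    rw [hq s]
    by_cases h : 0 < a s
    · rw [if_pos h]
      rw [mul_div_assoc', div_le_iff₀ h, mul_comm (b s) (b s)]
      have := Finset.sum_mul_sq_le_sq_mul_sq Finset.univ
        (fun t => Real.sqrt (w (s, t)))
        (fun t => Real.sqrt (w (s, t)) * p (s, t))
      have e1 : ∀ t : Ω₂, Real.sqrt (w (s, t)) * (Real.sqrt (w (s, t)) * p (s, t))
          = w (s, t) * p (s, t) := by
        intro t; rw [← mul_assoc, Real.mul_self_sqrt (hw _)]
      have e2 : ∀ t : Ω₂, Real.sqrt (w (s, t)) ^ 2 = w (s, t) := fun t =>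
        Real.sq_sqrt (hw _)
      have e3 : ∀ t : Ω₂, (Real.sqrt (w (s, t)) * p (s, t)) ^ 2
          = w (s, t) * p (s, t) * p (s, t) := by
        intro t; rw [mul_pow, Real.sq_sqrt (hw _)]; ring
      simp only [e1, e2, e3] at this
      calc b s * b s = b s ^ 2 := (sq (b s)).symm
        _ ≤ a s * ∑ t, w (s, t) * p (s, t) * p (s, t) := this
        _ = (∑ t, w (s, t) * p (s, t) * p (s, t)) * a s := mul_comm _ _
    · rw [if_neg h, hbz s h]
      simp
      exact Finset.sum_nonneg fun t _ =>
        mul_nonneg (mul_nonneg (hw _) (hp0 _)) (hp0 _)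
  -- key global Cauchy-Schwarz for the second inequality
  have hPsum : P = ∑ s, b s := by
    rw [hPdef, Fintype.sum_prod_type]
  have hasum : (∑ s, a s) = 1 := by
    rw [← hsum, Fintype.sum_prod_type]
  have key2 : P ^ 2 ≤ ∑ s, b s * q s := by
    have := Finset.sum_mul_sq_le_sq_mul_sq Finset.univ
      (fun s => Real.sqrt (a s)) (fun s => Real.sqrt (b s * q s))
    have hq' : ∀ s, q s = if 0 < a s then b s / a s else 0 := hq
    have e1 : ∀ s : Ω₁, Real.sqrt (a s) * Real.sqrt (b s * q s) = b s := by
      intro s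
      by_cases h : 0 < a s
      · have hab : a s * (b s * q s) = b s * b s := by
          rw [hq' s, if_pos h]; field_simp
        rw [← Real.sqrt_mul (ha0 s), hab, Real.sqrt_mul_self (hb0 s)]
      · rw [hbz s h, hq' s, if_neg h]
        simp
    have e2 : ∀ s : Ω₁, Real.sqrt (a s) ^ 2 = a s := fun s => Real.sq_sqrt (ha0 s)
    have e3 : ∀ s : Ω₁, Real.sqrt (b s * q s) ^ 2 = b s * q s := fun s =>
      Real.sq_sqrt (mul_nonneg (hb0 s) (hq0 s))
    simp only [e1, e2, e3] at this
    rw [hasum, one_mul] at this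
    rw [hPsum]
    exact this
  constructor
  · -- first inequality
    have lhs_eq : (∑ x, (w x * p x / P) * p x)
        = (∑ s, ∑ t, w (s, t) * p (s, t) * p (s, t)) / P := by
      rw [Finset.sum_div, Fintype.sum_prod_type]
      congr 1; ext s
      rw [Finset.sum_div]
      congr 1; ext t
      rw [div_mul_eq_mul_div]
    have rhs_eq : (∑ s, (b s / P) * q s) = (∑ s, b s * q s) / P := by
      rw [Finset.sum_div]
      congr 1; ext s; rw [div_mul_eq_mul_div]
    rw [lhs_eq, rhs_eq, ge_iff_le]
    gcongr with s hs
    exact key1 s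
  · -- second inequality
    have rhs_eq : (∑ s, (b s / P) * q s) = (∑ s, b s * q s) / P := by
      rw [Finset.sum_div]
      congr 1; ext s; rw [div_mul_eq_mul_div]
    rw [rhs_eq, ge_iff_le, le_div_iff₀ hP]
    calc P * P = P ^ 2 := (sq P).symm
      _ ≤ ∑ s, b s * q s := key2
end

section
/- Let p₀ ∈ ℝ with 0 ≤ p₀ ≤ 1/2, let Δ > 0, let n, k be natural numbers with k ≤ n and 2·k·(k+1) ≥ n·(n+1). Define p_i := p₀ + i·Δ for i = 0, 1, …, n, and assume p_i ≤ 1/2 for all i ≤ k and p_i ≥ 1/2 for all k < i ≤ n, and p_n ≤ 1. Then ∑_{i=0}^{k} p_i + ∑_{i=k+1}^{n} (1 − p_i) ≥ (n+1)·p₀. -/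
theorem hit_guided_more_pairs_hard (p₀ Δ : ℝ) (n k : ℕ)
    (h0 : 0 ≤ p₀) (h0' : p₀ ≤ 1 / 2) (hΔ : 0 < Δ)
    (hk : k ≤ n) (hcond : 2 * k * (k + 1) ≥ n * (n + 1))
    (hlo : ∀ i : ℕ, i ≤ k → p₀ + i * Δ ≤ 1 / 2)
    (hhi : ∀ i : ℕ, k < i → i ≤ n → 1 / 2 ≤ p₀ + i * Δ)
    (hn : p₀ + n * Δ ≤ 1) :
    ∑ i ∈ Finset.range (k + 1), (p₀ + i * Δ)
      + ∑ i ∈ Finset.Icc (k + 1) n, (1 - (p₀ + i * Δ))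
      ≥ (n + 1) * p₀ := by
  set A : ℝ := ∑ i ∈ Finset.range (k + 1), (i : ℝ) with hAdef
  set B : ℝ := ∑ i ∈ Finset.Icc (k + 1) n, (i : ℝ) with hBdef
  have hA : A * 2 = k * (k + 1) := by
    rw [hAdef, ← Nat.cast_sum]
    have : (∑ i ∈ Finset.range (k + 1), i) * 2 = k * (k + 1) := by
      simpa [Nat.mul_comm] using Finset.sum_range_id_mul_two (k + 1)
    exact_mod_cast this
  have hAB : A + B = (n : ℝ) * (n + 1) / 2 := by
    have hsplit : (∑ i ∈ Finset.Ico 0 (k + 1), (i : ℝ))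
        + ∑ i ∈ Finset.Ico (k + 1) (n + 1), (i : ℝ)
        = ∑ i ∈ Finset.Ico 0 (n + 1), (i : ℝ) :=
      Finset.sum_Ico_consecutive _ (Nat.zero_le _) (by omega)
    have h1 : (∑ i ∈ Finset.Ico 0 (n + 1), (i : ℝ)) * 2 = n * (n + 1) := by
      rw [← Finset.range_eq_Ico, ← Nat.cast_sum]
      have : (∑ i ∈ Finset.range (n + 1), i) * 2 = n * (n + 1) := by
        simpa [Nat.mul_comm] using Finset.sum_range_id_mul_two (n + 1)
      exact_mod_cast this
    have hIcc : Finset.Icc (k + 1) n = Finset.Ico (k + 1) (n + 1) := by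
      rw [Finset.Ico_add_one_right_eq_Icc]
    rw [hAdef, hBdef, hIcc, Finset.range_eq_Ico, hsplit]
    linarith
  have hcard : ((Finset.Icc (k + 1) n).card : ℝ) = (n : ℝ) - k := by
    rw [Nat.card_Icc]
    have h : n + 1 - (k + 1) = n - k := by omega
    rw [h, Nat.cast_sub hk]
  have e1 : ∑ i ∈ Finset.range (k + 1), (p₀ + i * Δ)
      = ((k : ℝ) + 1) * p₀ + A * Δ := by
    rw [Finset.sum_add_distrib, Finset.sum_const, Finset.card_range,
      ← Finset.sum_mul, hAdef]
    push_cast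
    ring
  have e2 : ∑ i ∈ Finset.Icc (k + 1) n, (1 - (p₀ + i * Δ))
      = ((n : ℝ) - k) * (1 - p₀) - B * Δ := by
    have : ∀ i ∈ Finset.Icc (k + 1) n, (1 - (p₀ + (i : ℝ) * Δ))
        = (1 - p₀) - (i : ℝ) * Δ := by intro i _; ring
    rw [Finset.sum_congr rfl this, Finset.sum_sub_distrib, Finset.sum_const,
      ← Finset.sum_mul, nsmul_eq_mul, hcard, hBdef]
  have hklo : p₀ + k * Δ ≤ 1 / 2 := hlo k le_rfl
  have hkn : (k : ℝ) ≤ n := by exact_mod_cast hk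
  have hcond' : (2 : ℝ) * k * (k + 1) ≥ n * (n + 1) := by exact_mod_cast hcond
  have hk0 : (0 : ℝ) ≤ k := Nat.cast_nonneg k
  rw [e1, e2]
  nlinarith [mul_nonneg (mul_nonneg hk0 (sub_nonneg.2 hkn)) hΔ.le,
    mul_le_mul_of_nonneg_left hklo (sub_nonneg.2 hkn),
    mul_nonneg (sub_nonneg.2 hkn) hΔ.le]
end

section
/- Let p₀ ∈ ℝ with 1/2 < p₀ ≤ 1, let Δ > 0, let n, k be natural numbers with k ≤ n and 2·k·(k+1) ≥ n·(n+1). Define p_i := p₀ − i·Δ for i = 0, 1, …, n, and assume p_i ≥ 1/2 for all i ≤ k, p_i ≤ 1/2 for all k < i ≤ n, and p_n ≥ 0. Then ∑_{i=0}^{k} (1 − p_i) + ∑_{i=k+1}^{n} p_i ≥ (n+1)·(1 − p₀). -/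
theorem hit_guided_more_pairs_easy (p₀ Δ : ℝ) (n k : ℕ)
    (h0 : 1 / 2 < p₀) (h0' : p₀ ≤ 1) (hΔ : 0 < Δ)
    (hk : k ≤ n) (hcond : 2 * k * (k + 1) ≥ n * (n + 1))
    (hhi : ∀ i : ℕ, i ≤ k → 1 / 2 ≤ p₀ - i * Δ)
    (hlo : ∀ i : ℕ, k < i → i ≤ n → p₀ - i * Δ ≤ 1 / 2)
    (hn : 0 ≤ p₀ - n * Δ) :
    ∑ i ∈ Finset.range (k + 1), (1 - (p₀ - i * Δ))
      + ∑ i ∈ Finset.Icc (k + 1) n, (p₀ - i * Δ)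
      ≥ (n + 1) * (1 - p₀) := by
  set S1 : ℝ := ∑ i ∈ Finset.range (k + 1), (i : ℝ) with hS1
  set S2 : ℝ := ∑ i ∈ Finset.Icc (k + 1) n, (i : ℝ) with hS2
  have hsum : S1 + S2 = ∑ i ∈ Finset.range (n + 1), (i : ℝ) := by
    rw [hS1, hS2]
    simp only [Finset.range_eq_Ico, ← Finset.Ico_add_one_right_eq_Icc]
    exact Finset.sum_Ico_consecutive _ (by omega) (by omega)
  have g1 : S1 * 2 = (k + 1) * k := by
    have := Finset.sum_range_id_mul_two (k + 1)
    have : ((∑ i ∈ Finset.range (k + 1), i) * 2 : ℕ) = (k + 1) * k := by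
      rw [this]; simp
    exact_mod_cast (by push_cast [hS1, ← this]; push_cast; ring_nf : S1 * 2 = (((∑ i ∈ Finset.range (k + 1), i) * 2 : ℕ) : ℝ)).trans (by exact_mod_cast congrArg (Nat.cast : ℕ → ℝ) this)
  have g2 : (S1 + S2) * 2 = (n + 1) * n := by
    have h := Finset.sum_range_id_mul_two (n + 1)
    have h' : ((∑ i ∈ Finset.range (n + 1), i) * 2 : ℕ) = (n + 1) * n := by rw [h]; simp
    rw [hsum]
    calc (∑ i ∈ Finset.range (n + 1), (i : ℝ)) * 2
        = (((∑ i ∈ Finset.range (n + 1), i) * 2 : ℕ) : ℝ) := by push_cast; ring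
      _ = ((n + 1) * n : ℕ) := by exact_mod_cast congrArg (Nat.cast : ℕ → ℝ) h'
      _ = ((n : ℝ) + 1) * n := by push_cast; ring
  have e1 : ∑ i ∈ Finset.range (k + 1), (1 - (p₀ - i * Δ))
      = (k + 1) * (1 - p₀) + S1 * Δ := by
    have : ∀ i : ℕ, 1 - (p₀ - (i : ℝ) * Δ) = (1 - p₀) + (i : ℝ) * Δ := by
      intro i; ring
    simp_rw [this, Finset.sum_add_distrib, Finset.sum_const, Finset.card_range,
      ← Finset.sum_mul]
    push_cast; ring
  have e2 : ∑ i ∈ Finset.Icc (k + 1) n, (p₀ - i * Δ)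
      = ((n : ℝ) - k) * p₀ - S2 * Δ := by
    have : ∀ i : ℕ, p₀ - (i : ℝ) * Δ = p₀ - (i : ℝ) * Δ := fun _ => rfl
    rw [Finset.sum_sub_distrib, Finset.sum_const, Nat.card_Icc, ← Finset.sum_mul, ← hS2]
    have hc : ((n + 1 - (k + 1) : ℕ) : ℝ) = (n : ℝ) - k := by
      have : n + 1 - (k + 1) = n - k := by omega
      rw [this, Nat.cast_sub hk]
    rw [nsmul_eq_mul, hc]
  rw [e1, e2]
  have hcond' : ((n : ℝ)) * (n + 1) ≤ 2 * k * (k + 1) := by exact_mod_cast hcond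
  have hkn : (k : ℝ) ≤ n := by exact_mod_cast hk
  nlinarith [mul_nonneg (le_of_lt hΔ) (by nlinarith : (0:ℝ) ≤ S1 - S2),
    mul_nonneg (by linarith : (0:ℝ) ≤ (n : ℝ) - k) (by linarith : (0:ℝ) ≤ 2 * p₀ - 1)]
end
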